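/- Let i ≥ 1 be a natural number and let Λ be any type. There is no view-distance-i verifier A over the label type Λ satisfying both: (error-tolerant completeness) for every n and every connected simple graph G on Fin n that contains a cycle, there exists an oracular labeling L_O : Fin n → Λ such that every labeling L : Fin n → Λ that differs from L_O at no more than i vertices satisfies A(G, L, v) = true for every vertex v; and (soundness) for every n ≥ 1 and every connected acyclic simple graph G on Fin n, for every labeling L : Fin n → Λ there exists a vertex v with A(G, L, v) = false. -/

import Mathlib

/-- `A` is a view-distance-`d` verifier over the label type `Λ`: its verdict at a
vertex is invariant under labeled pointed isomorphisms of radius-`d` balls. -/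
def IsLocalVerifier (Λ : Type*) (d : ℕ)
    (A : ∀ n : ℕ, SimpleGraph (Fin n) → (Fin n → Λ) → Fin n → Bool) : Prop :=
  ∀ (n n' : ℕ) (G : SimpleGraph (Fin n)) (G' : SimpleGraph (Fin n'))
    (L : Fin n → Λ) (L' : Fin n' → Λ) (v : Fin n) (v' : Fin n')
    (φ : G.induce {u | G.dist v u ≤ d} ≃g G'.induce {u | G'.dist v' u ≤ d})
    (hv : G.dist v v ≤ d),
    (↑(φ ⟨v, hv⟩) = v') →
    (∀ u : {u | G.dist v u ≤ d}, L' ↑(φ u) = L ↑u) →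
    A n G L v = A n' G' L' v'

/-!
Let `d` be the view distance. The tadpole on `4d + 4` vertices (a triangle with a long
tail) has a cycle, so it has an oracle labeling `LO` that survives `d` corruptions.
Fold the path on `4d + 2` vertices in the middle onto the tail and give each path vertex the
`LO`-label of its image. A path vertex in the left half sees, up to a labeled isomorphism, the
same ball as the corresponding tail vertex in the tadpole whose labels `2d + 1, …, 3d` have been
overwritten by the folded ones (only `d` corruptions); the right half is the mirror image of the
left. Hence every vertex of the path, a tree, accepts, contradicting soundness.
-/

open SimpleGraph

namespace SimpleGraph

theorem Reachable.le_add_dist_of_adj {V : Type*} {G : SimpleGraph V} {u v : V} (f : V → ℕ)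
    (hf : ∀ a b, G.Adj a b → f a ≤ f b + 1) (h : G.Reachable u v) :
    f u ≤ f v + G.dist u v := by
  obtain ⟨p, hp⟩ := h.exists_walk_length_eq_dist
  rw [← hp]
  clear h hp
  induction p with
  | nil => simp
  | cons hadj p ih =>
    have := hf _ _ hadj
    rw [Walk.length_cons]
    omega

section PathGraph

variable {n : ℕ}

theorem isAcyclic_pathGraph (n : ℕ) : (pathGraph n).IsAcyclic := by
  -- a walk from `a` to `a + 1` has to leave `{x | x ≤ a}`, which it can only do along `s(a, a + 1)`
  have key {a b : Fin n} (hab : a.val + 1 = b.val) (p : (pathGraph n).Walk a b) :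
      s(a, b) ∈ p.edges := by
    obtain ⟨e, he, hfst, hsnd⟩ :=
      p.exists_boundary_dart {x | x.val ≤ a.val} (by simp) (by simp; omega)
    have hadj := pathGraph_adj.1 e.adj
    have hedge : e.edge = s(a, b) := by
      simp only [Set.mem_ofPred_eq, not_le] at hfst hsnd
      simp only [Dart.edge, Sym2.eq_iff, Fin.ext_iff]
      omega
    exact hedge ▸ List.mem_map_of_mem he
  refine isAcyclic_iff_forall_adj_isBridge.2 fun v w hvw => ?_
  refine isBridge_iff_forall_walk_mem_edges.2 fun p => ?_
  rcases pathGraph_adj.1 hvw with h | h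
  · exact key h p
  · simpa [Sym2.eq_swap] using key h p.reverse

theorem pathGraph_dist_le_of_add_eq {u v : Fin n} {k : ℕ} (h : u.val + k = v.val) :
    (pathGraph n).dist u v ≤ k := by
  induction k generalizing u with
  | zero => simp [Fin.ext h]
  | succ k ih =>
    let w : Fin n := ⟨u.val + 1, by omega⟩
    have huw : (pathGraph n).Adj u w := pathGraph_adj.2 (Or.inl rfl)
    obtain ⟨p, hp⟩ := (pathGraph_preconnected n w v).exists_walk_length_eq_dist
    have hwv := ih (u := w) (by simp only [w]; omega)
    have huv := dist_le (Walk.cons huw p)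
    rw [Walk.length_cons] at huv
    omega

theorem pathGraph_dist_le_iff {d : ℕ} {u v : Fin n} :
    (pathGraph n).dist u v ≤ d ↔ u.val ≤ v.val + d ∧ v.val ≤ u.val + d := by
  have hlip (a b : Fin n) (h : (pathGraph n).Adj a b) : a.val ≤ b.val + 1 := by
    rw [pathGraph_adj] at h; omega
  refine ⟨fun h => ?_, fun h => ?_⟩
  · have h₁ := (pathGraph_preconnected n u v).le_add_dist_of_adj _ hlip
    have h₂ := (pathGraph_preconnected n v u).le_add_dist_of_adj _ hlip
    rw [dist_comm] at h₂
    omega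
  · rcases le_total u.val v.val with huv | hvu
    · exact (pathGraph_dist_le_of_add_eq (k := v.val - u.val) (by omega)).trans (by omega)
    · rw [dist_comm]
      exact (pathGraph_dist_le_of_add_eq (k := u.val - v.val) (by omega)).trans (by omega)

theorem pathGraph_adj_rev {u v : Fin n} :
    (pathGraph n).Adj u.rev v.rev ↔ (pathGraph n).Adj u v := by
  simp only [pathGraph_adj, Fin.val_rev]
  omega

end PathGraph

/-- The path `0 — 1 — ⋯ — n + 1` with the chord `{n - 1, n + 1}`: a triangle on `n - 1, n, n + 1`
with the tail `0 — ⋯ — n - 1`. -/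
def tadpole (n : ℕ) : SimpleGraph (Fin (n + 2)) :=
  pathGraph (n + 2) ⊔ edge ⟨n - 1, by omega⟩ (Fin.last (n + 1))

section Tadpole

variable {n : ℕ}

theorem tadpole_adj {u v : Fin (n + 2)} :
    (tadpole n).Adj u v ↔ u.val + 1 = v.val ∨ v.val + 1 = u.val ∨
      (u.val = n - 1 ∧ v.val = n + 1) ∨ (u.val = n + 1 ∧ v.val = n - 1) := by
  simp only [tadpole, sup_adj, pathGraph_adj, edge_adj, Fin.ext_iff, Fin.val_last, ne_eq]
  omega

theorem tadpole_connected (n : ℕ) : (tadpole n).Connected :=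
  (pathGraph_connected (n + 1)).mono le_sup_left

theorem not_isAcyclic_tadpole (hn : 1 ≤ n) : ¬ (tadpole n).IsAcyclic := fun h =>
  h.cliqueFree le_rfl {⟨n - 1, by omega⟩, ⟨n, by omega⟩, Fin.last (n + 1)}
    (is3Clique_triple_iff.2 ⟨tadpole_adj.2 (by simp; omega), tadpole_adj.2 (by simp),
      tadpole_adj.2 (by simp)⟩)

theorem tadpole_adj_castAdd {u v : Fin n} :
    (tadpole n).Adj (Fin.castAdd 2 u) (Fin.castAdd 2 v) ↔ (pathGraph n).Adj u v := by
  rw [tadpole_adj, pathGraph_adj]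
  simp only [Fin.val_castAdd]
  omega

theorem tadpole_dist_le_iff {d : ℕ} {u v : Fin (n + 2)} (hv : v.val + d + 2 ≤ n) :
    (tadpole n).dist v u ≤ d ↔ v.val ≤ u.val + d ∧ u.val ≤ v.val + d := by
  -- `min · (n - 1)` collapses the triangle onto the end of the tail
  have hlip (a b : Fin (n + 2)) (h : (tadpole n).Adj a b) :
      min a.val (n - 1) ≤ min b.val (n - 1) + 1 := by
    rw [tadpole_adj] at h; omega
  refine ⟨fun h => ?_, fun h => ?_⟩
  · have h₁ := ((tadpole_connected n).preconnected v u).le_add_dist_of_adj _ hlip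
    have h₂ := ((tadpole_connected n).preconnected u v).le_add_dist_of_adj _ hlip
    rw [dist_comm] at h₂
    omega
  · exact ((pathGraph_preconnected _ v u).dist_anti le_sup_left).trans
      (pathGraph_dist_le_iff.2 h)

end Tadpole

end SimpleGraph

section Folding

variable {Λ : Type*} {d : ℕ}

def foldedLabeling (LO : Fin (4 * d + 2 + 2) → Λ) (x : Fin (4 * d + 2)) : Λ :=
  LO (Fin.castAdd 2 (if x.val ≤ 2 * d then x else x.rev))

def corruptedLabeling (LO : Fin (4 * d + 2 + 2) → Λ) (y : Fin (4 * d + 2 + 2)) : Λ :=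
  if h : y.val ≤ 3 * d then foldedLabeling LO ⟨y.val, by omega⟩ else LO y

variable (LO : Fin (4 * d + 2 + 2) → Λ)

theorem foldedLabeling_rev (x : Fin (4 * d + 2)) :
    foldedLabeling LO x.rev = foldedLabeling LO x := by
  have := x.val_rev
  unfold foldedLabeling
  split_ifs <;> first | omega | rw [Fin.rev_rev] | rfl

theorem ncard_corruptedLabeling_ne_le : {y | corruptedLabeling LO y ≠ LO y}.ncard ≤ d := by
  have hsub (y) (hy : y ∈ {y | corruptedLabeling LO y ≠ LO y}) :
      y.val ∈ (Finset.Ioc (2 * d) (3 * d) : Set ℕ) := by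
    simp only [Set.mem_ofPred_eq, corruptedLabeling, foldedLabeling] at hy
    split_ifs at hy <;> first | (simp; omega) | exact absurd rfl hy
  calc _ ≤ (Finset.Ioc (2 * d) (3 * d) : Set ℕ).ncard :=
        Set.ncard_le_ncard_of_injOn _ hsub Fin.val_injective.injOn
    _ = d := by rw [Set.ncard_coe_finset, Nat.card_Ioc]; omega

end Folding

namespace IsLocalVerifier

variable {Λ : Type*} {d : ℕ} {A : ∀ n : ℕ, SimpleGraph (Fin n) → (Fin n → Λ) → Fin n → Bool}

theorem apply_eq_of_bijOn (hA : IsLocalVerifier Λ d A) {n n' : ℕ} {G : SimpleGraph (Fin n)}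
    {G' : SimpleGraph (Fin n')} {L : Fin n → Λ} {L' : Fin n' → Λ} {v : Fin n}
    (f : Fin n → Fin n') (hf : Set.BijOn f {u | G.dist v u ≤ d} {u | G'.dist (f v) u ≤ d})
    (hadj : ∀ x ∈ {u | G.dist v u ≤ d}, ∀ y ∈ {u | G.dist v u ≤ d},
      G'.Adj (f x) (f y) ↔ G.Adj x y)
    (hL : ∀ x ∈ {u | G.dist v u ≤ d}, L' (f x) = L x) :
    A n G L v = A n' G' L' (f v) :=
  hA n n' G G' L L' v (f v)
    { toEquiv := hf.equiv f, map_rel_iff' := fun {x y} => hadj x x.2 y y.2 }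
    (by simp) rfl fun x => hL x x.2

theorem apply_pathGraph_rev (hA : IsLocalVerifier Λ d A) {n : ℕ} {L : Fin n → Λ}
    (hL : ∀ x, L x.rev = L x) (x : Fin n) :
    A n (pathGraph n) L x = A n (pathGraph n) L x.rev := by
  refine hA.apply_eq_of_bijOn Fin.rev ⟨fun u hu => ?_, Fin.rev_injective.injOn,
    fun y hy => ⟨y.rev, ?_, Fin.rev_rev y⟩⟩ (fun _ _ _ _ => pathGraph_adj_rev) (fun u _ => hL u)
  · simp only [Set.mem_ofPred_eq, pathGraph_dist_le_iff, Fin.val_rev] at hu ⊢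
    omega
  · simp only [Set.mem_ofPred_eq, pathGraph_dist_le_iff, Fin.val_rev] at hy ⊢
    omega

theorem apply_foldedLabeling_eq (hA : IsLocalVerifier Λ d A) (LO : Fin (4 * d + 2 + 2) → Λ)
    {x : Fin (4 * d + 2)} (hx : x.val ≤ 2 * d) :
    A _ (pathGraph (4 * d + 2)) (foldedLabeling LO) x =
      A _ (tadpole (4 * d + 2)) (corruptedLabeling LO) (Fin.castAdd 2 x) := by
  have hball {u : Fin (4 * d + 2 + 2)} := tadpole_dist_le_iff (u := u) (v := Fin.castAdd 2 x)
    (d := d) (by simp only [Fin.val_castAdd]; omega)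
  refine hA.apply_eq_of_bijOn (Fin.castAdd 2) ⟨fun u hu => ?_, (Fin.castAdd_injective _ _).injOn,
    fun y hy => ?_⟩ (fun _ _ _ _ => tadpole_adj_castAdd) fun u hu => ?_
  · simp only [Set.mem_ofPred_eq, pathGraph_dist_le_iff] at hu
    simp only [Set.mem_ofPred_eq, hball, Fin.val_castAdd]
    omega
  · simp only [Set.mem_ofPred_eq, hball, Fin.val_castAdd] at hy
    refine ⟨⟨y.val, by omega⟩, ?_, Fin.ext rfl⟩
    simp only [Set.mem_ofPred_eq, pathGraph_dist_le_iff]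
    omega
  · simp only [Set.mem_ofPred_eq, pathGraph_dist_le_iff] at hu
    simp only [corruptedLabeling, Fin.val_castAdd, dif_pos (show u.val ≤ 3 * d by omega)]

theorem accepts_foldedLabeling (hA : IsLocalVerifier Λ d A) {LO : Fin (4 * d + 2 + 2) → Λ}
    (hacc : ∀ y, A _ (tadpole (4 * d + 2)) (corruptedLabeling LO) y = true)
    (x : Fin (4 * d + 2)) : A _ (pathGraph (4 * d + 2)) (foldedLabeling LO) x = true := by
  by_cases hx : x.val ≤ 2 * d
  · rw [hA.apply_foldedLabeling_eq LO hx]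
    exact hacc _
  · rw [hA.apply_pathGraph_rev (foldedLabeling_rev LO),
      hA.apply_foldedLabeling_eq LO (by rw [Fin.val_rev]; omega)]
    exact hacc _

end IsLocalVerifier

theorem no_error_tolerant_cycle_detection_general (i : ℕ) (Λ : Type) :
    ¬ ∃ A : ∀ n : ℕ, SimpleGraph (Fin n) → (Fin n → Λ) → Fin n → Bool,
      IsLocalVerifier Λ i A ∧
      (∀ (n : ℕ) (G : SimpleGraph (Fin n)), G.Connected → ¬ G.IsAcyclic →
        ∃ L_O : Fin n → Λ, ∀ L : Fin n → Λ,
          {v : Fin n | L v ≠ L_O v}.ncard ≤ i → ∀ v : Fin n, A n G L v = true) ∧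
      (∀ (n : ℕ), 1 ≤ n → ∀ G : SimpleGraph (Fin n), G.Connected → G.IsAcyclic →
        ∀ L : Fin n → Λ, ∃ v : Fin n, A n G L v = false) := by
  rintro ⟨A, hA, hcomplete, hsound⟩
  obtain ⟨LO, hLO⟩ := hcomplete _ (tadpole (4 * i + 2)) (tadpole_connected _)
    (not_isAcyclic_tadpole (by omega))
  obtain ⟨v, hv⟩ := hsound _ (by omega) _ (pathGraph_connected _) (isAcyclic_pathGraph _)
    (foldedLabeling LO)
  have hacc := hA.accepts_foldedLabeling (hLO _ (ncard_corruptedLabeling_ne_le LO)) v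
  exact absurd (hacc.symm.trans hv) (by decide)

/-- Impossibility of error-resilient cycle detection: no view-distance-`i` verifier
tolerates `i` adversarial label errors in the whole graph, with any label type. -/
theorem no_error_tolerant_cycle_detection (i : ℕ) (hi : 1 ≤ i) (Λ : Type) :
    ¬ ∃ A : ∀ n : ℕ, SimpleGraph (Fin n) → (Fin n → Λ) → Fin n → Bool,
      IsLocalVerifier Λ i A ∧
      (∀ (n : ℕ) (G : SimpleGraph (Fin n)), G.Connected → ¬ G.IsAcyclic →
        ∃ L_O : Fin n → Λ, ∀ L : Fin n → Λ,
          {v : Fin n | L v ≠ L_O v}.ncard ≤ i → ∀ v : Fin n, A n G L v = true) ∧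
      (∀ (n : ℕ), 1 ≤ n → ∀ G : SimpleGraph (Fin n), G.Connected → G.IsAcyclic →
        ∀ L : Fin n → Λ, ∃ v : Fin n, A n G L v = false) :=
  no_error_tolerant_cycle_detection_general i Λ
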